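/- Let $f \in \mathbb{C}[x_1, \dots, x_n, y_1, \dots, y_m]$ be symmetric in the $x$'s and in the $y$'s separately and satisfy the quasi-invariance condition: $T_{q,x_i}(f) = T_{t,y_j}(f)$ on each hyperplane $x_i = y_j$. Define $g = \sum_{i=1}^n \frac{A_i}{1-q}(T_{q,x_i}f - f) + \sum_{j=1}^m \frac{B_j}{1-t}(T_{t,y_j}f - f)$ where $A_i = \prod_{k\ne i}\frac{x_i - t x_k}{x_i - x_k}\prod_{j=1}^m \frac{x_i - q y_j}{x_i - y_j}$ and $B_j = \prod_{i=1}^n \frac{y_j - t x_i}{y_j - x_i}\prod_{l\ne j}\frac{y_j - q y_l}{y_j - y_l}$. Then $g$ is a polynomial (the a priori rational function $g$ has no poles along any of the hyperplanes $x_i = x_k$, $y_j = y_l$, $x_i = y_j$). -/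

import Mathlib

/-!
Write `z = (x, y)` and `δ_a = ∏_{v ≠ a} (z_a - z_v)`. The operator is `∑_a R_a / δ_a` with
polynomials `R_a`, and multiplying by the Vandermonde product `V` turns it into a polynomial `H`.
The linear forms `X a - X b` are pairwise non-associated primes, so `V ∣ H` as soon as each of
them divides `H`. Modulo `X a - X b` only the summands `a` and `b` of `H` survive, and they cancel
because `R_a = R_b` on the hyperplane `z_a = z_b`: for the rational prefactors this comes from
`(1 - t)(1 - q) = (1 - q)(1 - t)`, for the shifted values of `F` from the symmetry of `F` (two `x`'s
or two `y`'s) or from its quasi-invariance (an `x` and a `y`).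
-/

open Finset MvPolynomial

section SumType

variable {α β : Type*} [DecidableEq α] [DecidableEq β]

theorem Function.update_comp_swap_of_eq {γ : Type*} {x : α → γ} {i k : α} (h : x i = x k)
    (c : γ) :
    Function.update x i c ∘ Equiv.swap i k = Function.update x k c := by
  funext v
  simp only [Function.comp_apply, Function.update_apply, Equiv.swap_apply_def]
  split_ifs <;> simp_all

theorem Finset.prod_univ_erase_inl {M : Type*} [Fintype α] [Fintype β] [CommMonoid M]
    (f : α ⊕ β → M) (i : α) :
    ∏ v ∈ univ.erase (Sum.inl i), f v =
      (∏ k ∈ univ.erase i, f (Sum.inl k)) * ∏ j, f (Sum.inr j) := by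
  rw [show univ.erase (Sum.inl i) = (univ.erase i).disjSum univ by ext v; cases v <;> simp,
    prod_disjSum]

theorem Finset.prod_univ_erase_inr {M : Type*} [Fintype α] [Fintype β] [CommMonoid M]
    (f : α ⊕ β → M) (j : β) :
    ∏ v ∈ univ.erase (Sum.inr j), f v =
      (∏ i, f (Sum.inl i)) * ∏ l ∈ univ.erase j, f (Sum.inr l) := by
  rw [show univ.erase (Sum.inr j) = univ.disjSum (univ.erase j) by ext v; cases v <;> simp,
    prod_disjSum]

end SumType

namespace MvPolynomial

section LinearForms

variable {σ R : Type*} [CommRing R] [DecidableEq σ] {a b c d : σ}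

theorem eval_bind₁_update (z : σ → R) (a : σ) (Q P : MvPolynomial σ R) :
    eval z (bind₁ (Function.update X a Q) P) = eval (Function.update z a (eval z Q)) P := by
  rw [show eval z = eval₂Hom (RingHom.id R) z from rfl, eval₂Hom_bind₁]
  refine congrArg (fun w => eval w P) (_root_.funext fun v => ?_)
  rcases eq_or_ne v a with rfl | hv <;> simp [*]

theorem X_sub_X_dvd_sub_bind₁_update (a b : σ) (P : MvPolynomial σ R) :
    X a - X b ∣ P - bind₁ (Function.update X a (X b)) P := by
  induction P using MvPolynomial.induction_on with
  | C r => simp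
  | add P Q hP hQ => simpa [add_sub_add_comm] using dvd_add hP hQ
  | mul_X P v hP =>
    have hv : X a - X b ∣ (X v - Function.update X a (X b) v : MvPolynomial σ R) := by
      rcases eq_or_ne v a with rfl | hv <;> simp [*]
    rw [map_mul, bind₁_X_right]
    convert dvd_add (dvd_mul_of_dvd_left hP (X v))
      (dvd_mul_of_dvd_right hv (bind₁ (Function.update X a (X b)) P)) using 1
    ring

theorem X_sub_X_dvd_iff (hab : a ≠ b) {P : MvPolynomial σ R} :
    X a - X b ∣ P ↔ bind₁ (Function.update X a (X b)) P = 0 := by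
  refine ⟨?_, fun h => by simpa [h] using X_sub_X_dvd_sub_bind₁_update a b P⟩
  rintro ⟨Q, rfl⟩
  simp [Function.update_of_ne hab.symm]

theorem prime_X_sub_X [IsDomain R] (hab : a ≠ b) : Prime (X a - X b : MvPolynomial σ R) := by
  refine ⟨sub_ne_zero.mpr ((X_injective (R := R)).ne hab), fun hu => ?_, fun P Q h => ?_⟩
  · have := hu.map (bind₁ (Function.update X a (X b) : σ → MvPolynomial σ R))
    rw [(X_sub_X_dvd_iff hab).mp dvd_rfl] at this
    exact not_isUnit_zero this
  · simpa only [X_sub_X_dvd_iff hab, map_mul, mul_eq_zero] using h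

theorem sym2_eq_of_X_sub_X_dvd [Nontrivial R] (hab : a ≠ b) (hcd : c ≠ d)
    (h : X a - X b ∣ (X c - X d : MvPolynomial σ R)) : s(a, b) = s(c, d) := by
  rw [X_sub_X_dvd_iff hab, map_sub, bind₁_X_right, bind₁_X_right, sub_eq_zero,
    Function.update_apply, Function.update_apply] at h
  split_ifs at h with hc hd hd <;> simp_all [X_inj]

theorem isRelPrime_X_sub_X [IsDomain R] (hab : a ≠ b) (hcd : c ≠ d)
    (h : s(a, b) ≠ s(c, d)) :
    IsRelPrime (X a - X b : MvPolynomial σ R) (X c - X d) :=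
  (prime_X_sub_X hab).irreducible.isRelPrime_iff_not_dvd.mpr
    fun hdvd => h (sym2_eq_of_X_sub_X_dvd hab hcd hdvd)

theorem not_X_sub_X_dvd_prod [IsDomain R] (hab : a ≠ b) (s : Finset σ)
    (hs : ∀ v ∈ s, c ≠ v ∧ s(a, b) ≠ s(c, v)) :
    ¬ X a - X b ∣ ∏ v ∈ s, (X c - X v : MvPolynomial σ R) := fun h =>
  have ⟨v, hv, hdvd⟩ := (prime_X_sub_X hab).exists_mem_finset_dvd h
  (hs v hv).2 (sym2_eq_of_X_sub_X_dvd hab (hs v hv).1 hdvd)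

theorem X_sub_X_dvd_of_eval_eq_zero [IsDomain R] [Infinite R] (hab : a ≠ b)
    {P : MvPolynomial σ R} (h : ∀ z : σ → R, z a = z b → eval z P = 0) :
    X a - X b ∣ P := by
  rw [X_sub_X_dvd_iff hab]
  refine MvPolynomial.funext fun z => ?_
  rw [eval_bind₁_update, map_zero]
  exact h _ (by simp [Function.update_of_ne hab.symm])

end LinearForms

noncomputable section Vandermonde

variable (σ K : Type*) [Fintype σ] [Field K]

/-- The orientation of each factor is fixed by an arbitrary enumeration of `σ`. -/
def orientedPairs : Finset (σ × σ) :=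
  univ.filter fun p => Fintype.equivFin σ p.1 < Fintype.equivFin σ p.2

def vandermonde : MvPolynomial σ K := ∏ p ∈ orientedPairs σ, (X p.1 - X p.2)

variable {σ K}

theorem X_sub_X_dvd_vandermonde {a b : σ} (hab : a ≠ b) : X a - X b ∣ vandermonde σ K := by
  have hmem {a b : σ} (h : Fintype.equivFin σ a < Fintype.equivFin σ b) :
      X a - X b ∣ vandermonde σ K := by
    unfold vandermonde
    exact dvd_prod_of_mem (fun p : σ × σ => (X p.1 - X p.2 : MvPolynomial σ K))
      (a := (a, b)) (by simpa [orientedPairs] using h)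
  rcases lt_or_gt_of_ne ((Fintype.equivFin σ).injective.ne hab) with h | h
  · exact hmem h
  · simpa using (hmem h).neg_left

theorem eval_vandermonde_ne_zero {z : σ → K} (hz : Function.Injective z) :
    eval z (vandermonde σ K) ≠ 0 := by
  rw [vandermonde, map_prod, prod_ne_zero_iff]
  intro p hp
  rw [map_sub, eval_X, eval_X, sub_ne_zero]
  intro h
  simp [orientedPairs, hz h] at hp

variable [DecidableEq σ]

def diffProd (a : σ) : MvPolynomial σ K := ∏ v ∈ univ.erase a, (X a - X v)

theorem diffProd_dvd_vandermonde (a : σ) : diffProd a ∣ vandermonde σ K := by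
  refine prod_dvd_of_isRelPrime (fun v hv w hw hvw => ?_) fun v hv => ?_
  · exact isRelPrime_X_sub_X (ne_of_mem_erase hv).symm (ne_of_mem_erase hw).symm
      fun h => hvw (Sym2.congr_right.mp h)
  · exact X_sub_X_dvd_vandermonde (ne_of_mem_erase hv).symm

theorem vandermonde_dvd {H : MvPolynomial σ K} (h : ∀ a b, a ≠ b → X a - X b ∣ H) :
    vandermonde σ K ∣ H := by
  have hne : ∀ p ∈ orientedPairs σ, p.1 ≠ p.2 := fun p hp h => by
    simp [orientedPairs, h] at hp
  refine prod_dvd_of_isRelPrime (fun p hp p' hp' hpp' => ?_) fun p hp => h _ _ (hne p hp)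
  refine isRelPrime_X_sub_X (hne p hp) (hne p' hp') fun heq => ?_
  simp only [orientedPairs, mem_coe, mem_filter, mem_univ, true_and] at hp hp'
  rcases Sym2.eq_iff.mp heq with ⟨h1, h2⟩ | ⟨h1, h2⟩
  · exact hpp' (Prod.ext h1 h2)
  · rw [h1, h2] at hp
    exact lt_asymm hp hp'

theorem X_sub_X_dvd_cofactor {r : σ → MvPolynomial σ K}
    (hr : ∀ c, vandermonde σ K = diffProd c * r c) {a b c : σ} (hab : a ≠ b) (hca : c ≠ a)
    (hcb : c ≠ b) : X a - X b ∣ r c := by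
  have hδc : ¬ X a - X b ∣ (diffProd c : MvPolynomial σ K) :=
    not_X_sub_X_dvd_prod hab _ fun v hv => by
      refine ⟨(ne_of_mem_erase hv).symm, fun h => ?_⟩
      rcases Sym2.eq_iff.mp h with ⟨h1, -⟩ | ⟨-, h2⟩
      exacts [hca h1.symm, hcb h2.symm]
  have hV : X a - X b ∣ diffProd c * r c := hr c ▸ X_sub_X_dvd_vandermonde hab
  exact ((prime_X_sub_X hab).dvd_or_dvd hV).resolve_left hδc

theorem eval_diffProd (z : σ → K) (a : σ) :
    eval z (diffProd a) = ∏ v ∈ univ.erase a, (z a - z v) := by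
  simp [diffProd]

theorem eval_diffProd_ne_zero {z : σ → K} (hz : Function.Injective z) (a : σ) :
    eval z (diffProd a) ≠ 0 := by
  rw [eval_diffProd, prod_ne_zero_iff]
  exact fun v hv => sub_ne_zero.mpr (hz.ne (ne_of_mem_erase hv).symm)

end Vandermonde

section SimplePoles

variable {σ K : Type*} [Fintype σ] [DecidableEq σ] [Field K] [Infinite K]

theorem X_sub_X_dvd_sum_mul_cofactor (R r : σ → MvPolynomial σ K)
    (hr : ∀ c, vandermonde σ K = diffProd c * r c)
    (hres : ∀ a b, a ≠ b → ∀ z : σ → K, z a = z b → eval z (R a) = eval z (R b))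
    {a b : σ} (hab : a ≠ b) : X a - X b ∣ ∑ c, R c * r c := by
  have hp := prime_X_sub_X (R := K) hab
  have hbmem : b ∈ univ.erase a := mem_erase.mpr ⟨hab.symm, mem_univ b⟩
  set ρa := ∏ v ∈ (univ.erase a).erase b, (X a - X v : MvPolynomial σ K)
  set ρb := ∏ v ∈ (univ.erase b).erase a, (X b - X v : MvPolynomial σ K)
  have hδa : diffProd a = (X a - X b) * ρa := (mul_prod_erase _ _ hbmem).symm
  have hδb : diffProd b = -(X a - X b) * ρb := by
    rw [neg_sub]
    exact (mul_prod_erase _ _ (mem_erase.mpr ⟨hab, mem_univ a⟩)).symm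
  have hcof : ρa * r a + ρb * r b = 0 := by
    refine mul_left_cancel₀ hp.ne_zero ?_
    linear_combination hr b - hr a - r a * hδa + r b * hδb
  -- `ρa` and `ρb` agree on `z a = z b`, so there the residue condition cancels the two terms.
  have hpair : X a - X b ∣ R a * r a + R b * r b := by
    have hρ : ¬ X a - X b ∣ ρa := not_X_sub_X_dvd_prod hab _ fun v hv => by
      simp only [mem_erase] at hv
      exact ⟨Ne.symm hv.2.1, fun h => hv.1 (Sym2.congr_right.mp h).symm⟩
    have hvan : X a - X b ∣ R b * ρa - R a * ρb := by
      refine X_sub_X_dvd_of_eval_eq_zero hab fun z hz => ?_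
      simp only [ρa, ρb, map_sub, map_mul, map_prod, eval_X, hres a b hab z hz, hz,
        erase_right_comm (s := univ) (a := a) (b := b), sub_self]
    refine (hp.dvd_or_dvd ?_).resolve_left hρ
    have e : ρa * (R a * r a + R b * r b) = r b * (R b * ρa - R a * ρb) := by
      linear_combination R a * hcof
    exact e ▸ dvd_mul_of_dvd_right hvan _
  have hrest : ∀ c ∈ (univ.erase a).erase b, X a - X b ∣ R c * r c := fun c hc => by
    simp only [mem_erase] at hc
    exact dvd_mul_of_dvd_right (X_sub_X_dvd_cofactor hr hab hc.2.1 hc.1) _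
  rw [← add_sum_erase _ _ (mem_univ a), ← add_sum_erase _ _ hbmem, ← add_assoc]
  exact dvd_add hpair (dvd_sum hrest)

theorem exists_eval_eq_sum_div_prod_sub (R : σ → MvPolynomial σ K)
    (hres : ∀ a b, a ≠ b → ∀ z : σ → K, z a = z b → eval z (R a) = eval z (R b)) :
    ∃ G : MvPolynomial σ K, ∀ z : σ → K, Function.Injective z →
      eval z G = ∑ a, eval z (R a) / ∏ v ∈ univ.erase a, (z a - z v) := by
  choose r hr using fun c : σ => diffProd_dvd_vandermonde (K := K) c
  obtain ⟨G, hG⟩ := vandermonde_dvd fun a b hab => X_sub_X_dvd_sum_mul_cofactor R r hr hres hab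
  refine ⟨G, fun z hz => mul_left_cancel₀ (eval_vandermonde_ne_zero hz) ?_⟩
  rw [← map_mul, ← hG, map_sum, mul_sum]
  refine sum_congr rfl fun c _ => ?_
  rw [hr c, map_mul, map_mul, ← eval_diffProd]
  field_simp [eval_diffProd_ne_zero hz c]

end SimplePoles

noncomputable section MacdonaldOperator

variable {σ K : Type*} [Fintype σ] [DecidableEq σ] [Field K]

def macdonaldNumerator (κ : σ → K) (a : σ) : MvPolynomial σ K :=
  ∏ v ∈ univ.erase a, (X a - C (κ v) * X v)

/-- With `κ = t` on the `x`'s and `q` on the `y`'s, and `ρ = q` on the `x`'s and `t` on the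
`y`'s, `macdonaldTerm κ ρ F a / diffProd a` is the summand of the operator indexed by `a`, so that
`A_i` and `B_j` are one formula. -/
def macdonaldTerm (κ ρ : σ → K) (F : MvPolynomial σ K) (a : σ) : MvPolynomial σ K :=
  C (1 - ρ a)⁻¹ * macdonaldNumerator κ a *
    (bind₁ (Function.update X a (C (ρ a) * X a)) F - F)

theorem eval_macdonaldTerm (κ ρ : σ → K) (F : MvPolynomial σ K) (a : σ) (z : σ → K) :
    eval z (macdonaldTerm κ ρ F a) = (∏ v ∈ univ.erase a, (z a - κ v * z v)) / (1 - ρ a) *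
      (eval (Function.update z a (ρ a * z a)) F - eval z F) := by
  simp [macdonaldTerm, macdonaldNumerator, eval_bind₁_update, div_eq_inv_mul, mul_assoc]

theorem prod_erase_sub_mul_div_eq (κ ρ : σ → K) {a b : σ} (hab : a ≠ b) (hρa : ρ a ≠ 1)
    (hρb : ρ b ≠ 1) (hκρ : (1 - κ a) * (1 - ρ a) = (1 - κ b) * (1 - ρ b)) {z : σ → K}
    (hz : z a = z b) :
    (∏ v ∈ univ.erase a, (z a - κ v * z v)) / (1 - ρ a) =
      (∏ v ∈ univ.erase b, (z b - κ v * z v)) / (1 - ρ b) := by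
  rw [← mul_prod_erase _ _ (mem_erase.mpr ⟨hab.symm, mem_univ b⟩),
    ← mul_prod_erase _ _ (mem_erase.mpr ⟨hab, mem_univ a⟩), erase_right_comm, hz]
  have ha : 1 - ρ a ≠ 0 := sub_ne_zero.mpr hρa.symm
  have hb : 1 - ρ b ≠ 0 := sub_ne_zero.mpr hρb.symm
  field_simp
  linear_combination -(z b * ∏ v ∈ (univ.erase b).erase a, (z b - κ v * z v)) * hκρ

theorem eval_macdonaldTerm_eq (κ ρ : σ → K) (F : MvPolynomial σ K) {a b : σ} (hab : a ≠ b)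
    (hρa : ρ a ≠ 1) (hρb : ρ b ≠ 1)
    (hκρ : (1 - κ a) * (1 - ρ a) = (1 - κ b) * (1 - ρ b)) {z : σ → K} (hz : z a = z b)
    (hF : eval (Function.update z a (ρ a * z a)) F =
      eval (Function.update z b (ρ b * z b)) F) :
    eval z (macdonaldTerm κ ρ F a) = eval z (macdonaldTerm κ ρ F b) := by
  rw [eval_macdonaldTerm, eval_macdonaldTerm,
    prod_erase_sub_mul_div_eq κ ρ hab hρa hρb hκρ hz, hF]

end MacdonaldOperator

section QuasiInvariant

variable {α β K : Type*} [DecidableEq α] [DecidableEq β] [CommRing K]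

theorem eval_update_eq_of_quasiInvariant (q t : K) (F : MvPolynomial (α ⊕ β) K)
    (hsymx : ∀ (σ : Equiv.Perm α) (x : α → K) (y : β → K),
      eval (Sum.elim (x ∘ σ) y) F = eval (Sum.elim x y) F)
    (hsymy : ∀ (τ : Equiv.Perm β) (x : α → K) (y : β → K),
      eval (Sum.elim x (y ∘ τ)) F = eval (Sum.elim x y) F)
    (hquasi : ∀ (x : α → K) (y : β → K) (i : α) (j : β), x i = y j →
      eval (Sum.elim (Function.update x i (q * x i)) y) F =
        eval (Sum.elim x (Function.update y j (t * y j))) F)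
    {a b : α ⊕ β} {z : α ⊕ β → K} (hz : z a = z b) :
    eval (Function.update z a (Sum.elim (fun _ => q) (fun _ => t) a * z a)) F =
      eval (Function.update z b (Sum.elim (fun _ => q) (fun _ => t) b * z b)) F := by
  obtain ⟨x, y, rfl⟩ : ∃ x y, z = Sum.elim x y := ⟨_, _, (Sum.elim_comp_inl_inr z).symm⟩
  rcases a with i | j <;> rcases b with k | l <;>
    simp only [Sum.elim_inl, Sum.elim_inr, Sum.update_elim_inl, Sum.update_elim_inr] at hz ⊢
  · rw [← hz, ← Function.update_comp_swap_of_eq hz, hsymx]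
  · exact hquasi x y i l hz
  · exact (hquasi x y k j hz.symm).symm
  · rw [← hz, ← Function.update_comp_swap_of_eq hz, hsymy]

end QuasiInvariant

end MvPolynomial

theorem stmt15 (q t : ℂ) (hq : q ≠ 1) (ht : t ≠ 1) (n m : ℕ)
    (F : MvPolynomial (Fin n ⊕ Fin m) ℂ)
    (hsymx : ∀ (σ : Equiv.Perm (Fin n)) (x : Fin n → ℂ) (y : Fin m → ℂ),
      eval (Sum.elim (x ∘ σ) y) F = eval (Sum.elim x y) F)
    (hsymy : ∀ (τ : Equiv.Perm (Fin m)) (x : Fin n → ℂ) (y : Fin m → ℂ),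
      eval (Sum.elim x (y ∘ τ)) F = eval (Sum.elim x y) F)
    (hquasi : ∀ (x : Fin n → ℂ) (y : Fin m → ℂ) (i : Fin n) (j : Fin m),
      x i = y j →
      eval (Sum.elim (Function.update x i (q * x i)) y) F =
        eval (Sum.elim x (Function.update y j (t * y j))) F) :
    ∃ G : MvPolynomial (Fin n ⊕ Fin m) ℂ,
      ∀ (x : Fin n → ℂ) (y : Fin m → ℂ),
        Function.Injective x → Function.Injective y → (∀ i j, x i ≠ y j) →
        eval (Sum.elim x y) G =
          ∑ i, ((∏ k ∈ Finset.univ.erase i, (x i - t * x k) / (x i - x k)) *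
              ∏ j, (x i - q * y j) / (x i - y j)) / (1 - q) *
              (eval (Sum.elim (Function.update x i (q * x i)) y) F -
                eval (Sum.elim x y) F) +
          ∑ j, ((∏ i, (y j - t * x i) / (y j - x i)) *
              ∏ l ∈ Finset.univ.erase j, (y j - q * y l) / (y j - y l)) / (1 - t) *
              (eval (Sum.elim x (Function.update y j (t * y j))) F -
                eval (Sum.elim x y) F) := by
  set κ : Fin n ⊕ Fin m → ℂ := Sum.elim (fun _ => t) (fun _ => q)
  set ρ : Fin n ⊕ Fin m → ℂ := Sum.elim (fun _ => q) (fun _ => t)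
  have hρ : ∀ v, ρ v ≠ 1 := by rintro (i | j) <;> assumption
  have hκρ : ∀ v w, (1 - κ v) * (1 - ρ v) = (1 - κ w) * (1 - ρ w) := by
    rintro (i | i) (j | j) <;> simp only [κ, ρ, Sum.elim_inl, Sum.elim_inr] <;> ring
  obtain ⟨G, hG⟩ := exists_eval_eq_sum_div_prod_sub (macdonaldTerm κ ρ F)
    fun a b hab z hz => eval_macdonaldTerm_eq κ ρ F hab (hρ a) (hρ b) (hκρ a b) hz
      (eval_update_eq_of_quasiInvariant q t F hsymx hsymy hquasi hz)
  refine ⟨G, fun x y hx hy hxy => ?_⟩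
  rw [hG _ (hx.sumElim hy hxy), Fintype.sum_sum_type]
  simp only [eval_macdonaldTerm, prod_univ_erase_inl, prod_univ_erase_inr, Sum.elim_inl,
    Sum.elim_inr, Sum.update_elim_inl, Sum.update_elim_inr, κ, ρ, prod_div_distrib]
  congr 1 <;> exact sum_congr rfl fun _ _ => by ring
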